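/- Let X ⊂ ℝ^d be a compact convex set with nonempty interior, let ψ be a C² function on an open set containing X whose Hessian ψ″ is positive definite on X, and let γ be the associated Riemannian distance with paths in X. Let λ > 1, let U be a relatively open convex subset of X, and let p ∈ U be such that for all u ∈ U and v ∈ ℝ^d: (1/λ)·vᵀψ″(u)v ≤ vᵀψ″(p)v ≤ λ·vᵀψ″(u)v. Then for all x, y ∈ U with γ(x,y) < inf{ γ(x,z) : z ∈ X \ U }, one has (1/(2λ⁴))·γ(x,y)² ≤ D_ψ(x;y) ≤ (λ⁴/2)·γ(x,y)². -/

import Mathlib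

/-- The Hessian matrix of `ψ : ℝ^d → ℝ` at the point `x`. -/
noncomputable def hess {d : ℕ} (ψ : EuclideanSpace ℝ (Fin d) → ℝ)
    (x : EuclideanSpace ℝ (Fin d)) : Matrix (Fin d) (Fin d) ℝ :=
  Matrix.of fun i j =>
    iteratedFDeriv ℝ 2 ψ x ![EuclideanSpace.single i 1, EuclideanSpace.single j 1]

/-- The quadratic form `v ↦ vᵀ M v` on `ℝ^d` associated to a matrix `M`. -/
noncomputable def quadForm {d : ℕ} (M : Matrix (Fin d) (Fin d) ℝ)
    (v : EuclideanSpace ℝ (Fin d)) : ℝ :=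
  ∑ i, ∑ j, v i * M i j * v j

/-- The Bregman distance `D_ψ(x;y) = ψ(x) − ψ(y) − ∇ψ(y)ᵀ(x−y)`. -/
noncomputable def breg {d : ℕ} (ψ : EuclideanSpace ℝ (Fin d) → ℝ)
    (x y : EuclideanSpace ℝ (Fin d)) : ℝ :=
  ψ x - ψ y - inner ℝ (gradient ψ y) (x - y)

/-- The Riemannian distance on `X` associated to the Hessian metric of `ψ`. -/
noncomputable def riemDist {d : ℕ} (X : Set (EuclideanSpace ℝ (Fin d)))
    (ψ : EuclideanSpace ℝ (Fin d) → ℝ) (x y : EuclideanSpace ℝ (Fin d)) : ℝ :=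
  sInf {L : ℝ | ∃ u : ℝ → EuclideanSpace ℝ (Fin d), ContDiff ℝ 1 u ∧
    (∀ t ∈ Set.Icc (0 : ℝ) 1, u t ∈ X) ∧ u 0 = x ∧ u 1 = y ∧
    L = ∫ t in (0:ℝ)..1, Real.sqrt (quadForm (hess ψ (u t)) (deriv u t))}

/-!
Let `N = (y - x)ᵀ ψ''(p) (y - x)`. By Taylor's theorem, `D_ψ(x;y)` is half the Hessian form of `ψ`
at a point of `[y, x] ⊆ U`, evaluated at `y - x`, so it lies between `N / (2λ)` and `λ N / 2`.
The segment from `x` to `y` shows `γ(x,y)² ≤ λ N`. Conversely, a path from `x` to `y` either stays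
in `U`, and then, `√N` being a Euclidean norm of a linear image of `y - x`, its length is at least
`√(N / λ)`; or it meets `X \ U`, and then its length is at least the distance from `x` to `X \ U`,
which exceeds `γ(x,y)`. Hence `N ≤ λ γ(x,y)²`.
-/

open Set Matrix intervalIntegral AffineMap

noncomputable def curveLength {d : ℕ} (ψ : EuclideanSpace ℝ (Fin d) → ℝ)
    (u : ℝ → EuclideanSpace ℝ (Fin d)) (a b : ℝ) : ℝ :=
  ∫ t in a..b, √(quadForm (hess ψ (u t)) (deriv u t))

def HessComparable {d : ℕ} (ψ : EuclideanSpace ℝ (Fin d) → ℝ)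
    (U : Set (EuclideanSpace ℝ (Fin d))) (p : EuclideanSpace ℝ (Fin d)) (lam : ℝ) : Prop :=
  ∀ u ∈ U, ∀ v : EuclideanSpace ℝ (Fin d),
    (1 / lam) * quadForm (hess ψ u) v ≤ quadForm (hess ψ p) v ∧
    quadForm (hess ψ p) v ≤ lam * quadForm (hess ψ u) v

variable {d : ℕ}

section QuadForm

lemma quadForm_smul (M : Matrix (Fin d) (Fin d) ℝ) (c : ℝ) (v : EuclideanSpace ℝ (Fin d)) :
    quadForm M (c • v) = c ^ 2 * quadForm M v := by
  simp only [quadForm, PiLp.smul_apply, smul_eq_mul, Finset.mul_sum]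
  exact Finset.sum_congr rfl fun i _ => Finset.sum_congr rfl fun j _ => by ring

lemma quadForm_sub_comm (M : Matrix (Fin d) (Fin d) ℝ) (x y : EuclideanSpace ℝ (Fin d)) :
    quadForm M (x - y) = quadForm M (y - x) := by
  rw [← neg_sub y x, ← neg_one_smul ℝ (y - x), quadForm_smul, neg_one_sq, one_mul]

lemma continuousOn_quadForm {α : Type*} [TopologicalSpace α] {f : α → Matrix (Fin d) (Fin d) ℝ}
    {g : α → EuclideanSpace ℝ (Fin d)} {s : Set α} (hf : ContinuousOn f s) (hg : ContinuousOn g s) :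
    ContinuousOn (fun t => quadForm (f t) (g t)) s := by
  unfold quadForm
  fun_prop

/-- Writing `M = ∑ᵢ wᵢ wᵢᵀ`, the quadratic form is `‖(wᵢ ⬝ v)ᵢ‖²`. -/
lemma Matrix.PosSemidef.exists_quadForm_eq_norm_sq {M : Matrix (Fin d) (Fin d) ℝ}
    (hM : M.PosSemidef) : ∃ (m : ℕ) (L : EuclideanSpace ℝ (Fin d) →L[ℝ] EuclideanSpace ℝ (Fin m)),
      ∀ v, quadForm M v = ‖L v‖ ^ 2 := by
  obtain ⟨m, w, rfl⟩ := posSemidef_iff_eq_sum_vecMulVec.mp hM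
  refine ⟨m, LinearMap.toContinuousLinearMap (toLpLin 2 2 (Matrix.of w)), fun v => ?_⟩
  simp only [LinearMap.coe_toContinuousLinearMap', EuclideanSpace.real_norm_sq_eq, toLpLin_apply]
  simp only [quadForm, Matrix.sum_apply, vecMulVec_apply, mulVec, dotProduct, sq, Finset.mul_sum,
    Finset.sum_mul, star_trivial, of_apply]
  refine (Finset.sum_congr rfl fun j _ => Finset.sum_comm).trans (Finset.sum_comm.trans ?_)
  exact Finset.sum_congr rfl fun i _ => Finset.sum_congr rfl fun j _ =>
    Finset.sum_congr rfl fun k _ => by ring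

lemma Matrix.PosSemidef.quadForm_nonneg {M : Matrix (Fin d) (Fin d) ℝ} (hM : M.PosSemidef)
    (v : EuclideanSpace ℝ (Fin d)) : 0 ≤ quadForm M v := by
  obtain ⟨m, L, hL⟩ := hM.exists_quadForm_eq_norm_sq
  rw [hL]
  positivity

lemma Matrix.PosSemidef.sqrt_quadForm_sub_le_integral {M : Matrix (Fin d) (Fin d) ℝ}
    (hM : M.PosSemidef) {u : ℝ → EuclideanSpace ℝ (Fin d)} (hu : ContDiff ℝ 1 u) {a b : ℝ}
    (hab : a ≤ b) : √(quadForm M (u b - u a)) ≤ ∫ t in a..b, √(quadForm M (deriv u t)) := by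
  obtain ⟨m, L, hL⟩ := hM.exists_quadForm_eq_norm_sq
  simp only [hL, Real.sqrt_sq (norm_nonneg _), map_sub]
  have hLu : ∀ t, HasDerivAt (fun t => L (u t)) (L (deriv u t)) t := fun t =>
    L.hasFDerivAt.comp_hasDerivAt t ((hu.differentiable one_ne_zero) t).hasDerivAt
  exact norm_sub_le_integral_of_norm_deriv_le_of_le (f := fun t => L (u t))
    (B := fun t => ‖L (deriv u t)‖) hab
    (L.continuous.comp hu.continuous).continuousOn
    (fun t _ => (hLu t).differentiableAt.differentiableWithinAt)
    (Filter.Eventually.of_forall fun t _ => by rw [(hLu t).deriv])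
    ((L.continuous.comp (hu.continuous_deriv le_rfl)).norm.intervalIntegrable a b)

end QuadForm

section Hessian

variable {ψ : EuclideanSpace ℝ (Fin d) → ℝ} {V : Set (EuclideanSpace ℝ (Fin d))}

lemma quadForm_hess (ψ : EuclideanSpace ℝ (Fin d) → ℝ) (z v : EuclideanSpace ℝ (Fin d)) :
    quadForm (hess ψ z) v = fderiv ℝ (fderiv ℝ ψ) z v v := by
  have hv : v = ∑ i, v i • EuclideanSpace.single i (1 : ℝ) := by
    simpa using ((EuclideanSpace.basisFun (Fin d) ℝ).sum_repr v).symm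
  conv_rhs => rw [hv]
  simp only [quadForm, hess, iteratedFDeriv_two_apply, map_sum, map_smul, _root_.sum_apply,
    _root_.smul_apply, smul_eq_mul, Finset.mul_sum, of_apply, cons_val_zero, cons_val_one]
  rw [Finset.sum_comm]
  exact Finset.sum_congr rfl fun i _ => Finset.sum_congr rfl fun j _ => by ring

lemma continuousOn_hess (hV : IsOpen V) (hψ : ContDiffOn ℝ 2 ψ V) : ContinuousOn (hess ψ) V := by
  have h : ContinuousOn (iteratedFDeriv ℝ 2 ψ) V :=
    (hψ.continuousOn_iteratedFDerivWithin (m := 2) le_rfl hV.uniqueDiffOn).congr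
      fun z hz => (iteratedFDerivWithin_of_isOpen 2 hV hz).symm
  refine continuousOn_pi.2 fun i => continuousOn_pi.2 fun j => ?_
  exact (continuous_eval_const _).comp_continuousOn h

lemma intervalIntegrable_sqrt_quadForm_hess (hV : IsOpen V) (hψ : ContDiffOn ℝ 2 ψ V)
    {u : ℝ → EuclideanSpace ℝ (Fin d)} (hu : ContDiff ℝ 1 u) {a b : ℝ}
    (huV : ∀ t ∈ uIcc a b, u t ∈ V) :
    IntervalIntegrable (fun t => √(quadForm (hess ψ (u t)) (deriv u t)))
      MeasureTheory.volume a b := by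
  have hH : ContinuousOn (fun t => hess ψ (u t)) (uIcc a b) :=
    (continuousOn_hess hV hψ).comp hu.continuous.continuousOn huV
  have hQ : ContinuousOn (fun t => quadForm (hess ψ (u t)) (deriv u t)) (uIcc a b) :=
    continuousOn_quadForm hH (hu.continuous_deriv le_rfl).continuousOn
  exact (Real.continuous_sqrt.comp_continuousOn hQ).intervalIntegrable

/-- Cauchy's mean value theorem for `g - t g'(0)` against `t²`, followed by the mean value
theorem for `g'`. -/
lemma exists_sub_sub_deriv_eq_half_second_deriv {g g' g'' : ℝ → ℝ}
    (hg : ∀ t ∈ Icc (0 : ℝ) 1, HasDerivAt g (g' t) t)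
    (hg' : ∀ t ∈ Icc (0 : ℝ) 1, HasDerivAt g' (g'' t) t) :
    ∃ c ∈ Ioo (0 : ℝ) 1, g 1 - g 0 - g' 0 = g'' c / 2 := by
  obtain ⟨c, hc, hcauchy⟩ := exists_ratio_hasDerivAt_eq_ratio_slope
    (fun t => g t - t * g' 0) (fun t => g' t - g' 0) zero_lt_one
    (fun t ht =>
      ((hg t ht).continuousAt.sub (continuousAt_id.mul continuousAt_const)).continuousWithinAt)
    (fun t ht =>
      ((hg t (Ioo_subset_Icc_self ht)).sub ((hasDerivAt_id' t).mul_const (g' 0))).congr_deriv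
        (by ring))
    (fun t => t ^ 2) (fun t => 2 * t) (continuous_pow 2).continuousOn
    (fun t _ => by simpa using hasDerivAt_pow 2 t)
  have hsub : Icc 0 c ⊆ Icc (0 : ℝ) 1 := Icc_subset_Icc le_rfl hc.2.le
  obtain ⟨c', hc', hmean⟩ := exists_hasDerivAt_eq_slope g' g'' hc.1
    (fun t ht => (hg' t (hsub ht)).continuousAt.continuousWithinAt)
    (fun t ht => hg' t (hsub (Ioo_subset_Icc_self ht)))
  refine ⟨c', ⟨hc'.1, hc'.2.trans hc.2⟩, ?_⟩
  rw [hmean, sub_zero, div_div, eq_div_iff (by nlinarith [hc.1])]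
  linarith

lemma exists_breg_eq_half_quadForm_hess (hV : IsOpen V) (hψ : ContDiffOn ℝ 2 ψ V)
    {x y : EuclideanSpace ℝ (Fin d)} (hxy : segment ℝ y x ⊆ V) :
    ∃ z ∈ segment ℝ y x, breg ψ x y = quadForm (hess ψ z) (y - x) / 2 := by
  have hV' : ∀ t ∈ Icc (0 : ℝ) 1, ContDiffAt ℝ 2 ψ (lineMap y x t) := fun t ht =>
    hψ.contDiffAt (hV.mem_nhds (hxy (lineMap_mem_segment ℝ y x ht)))
  obtain ⟨c, hc, hmean⟩ := exists_sub_sub_deriv_eq_half_second_deriv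
    (g := fun t => ψ (lineMap y x t)) (g' := fun t => fderiv ℝ ψ (lineMap y x t) (x - y))
    (g'' := fun t => fderiv ℝ (fderiv ℝ ψ) (lineMap y x t) (x - y) (x - y))
    (fun t ht => ((hV' t ht).differentiableAt two_ne_zero).hasFDerivAt.comp_hasDerivAt t
      hasDerivAt_lineMap)
    (fun t ht => (ContinuousLinearMap.apply ℝ ℝ (x - y)).hasFDerivAt.comp_hasDerivAt t <|
      (((hV' t ht).fderiv_right (m := 1) le_rfl).differentiableAt
        one_ne_zero).hasFDerivAt.comp_hasDerivAt t hasDerivAt_lineMap)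
  refine ⟨lineMap y x c, lineMap_mem_segment ℝ y x (Ioo_subset_Icc_self hc), ?_⟩
  simp only [lineMap_apply_one, lineMap_apply_zero] at hmean
  rw [breg, inner_gradient_left, hmean, ← quadForm_sub_comm, quadForm_hess]

end Hessian

section RiemDist

variable {X : Set (EuclideanSpace ℝ (Fin d))} {ψ : EuclideanSpace ℝ (Fin d) → ℝ}
  {x y : EuclideanSpace ℝ (Fin d)}

lemma curveLength_nonneg (ψ : EuclideanSpace ℝ (Fin d) → ℝ) (u : ℝ → EuclideanSpace ℝ (Fin d))
    {a b : ℝ} (hab : a ≤ b) : 0 ≤ curveLength ψ u a b :=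
  integral_nonneg hab fun _ _ => Real.sqrt_nonneg _

lemma riemDist_nonneg (X : Set (EuclideanSpace ℝ (Fin d))) (ψ : EuclideanSpace ℝ (Fin d) → ℝ)
    (x y : EuclideanSpace ℝ (Fin d)) : 0 ≤ riemDist X ψ x y :=
  Real.sInf_nonneg <| by
    rintro _ ⟨u, -, -, -, -, rfl⟩
    exact curveLength_nonneg ψ u zero_le_one

lemma riemDist_le_curveLength {u : ℝ → EuclideanSpace ℝ (Fin d)} (hu : ContDiff ℝ 1 u)
    (huX : ∀ t ∈ Icc (0 : ℝ) 1, u t ∈ X) (h0 : u 0 = x) (h1 : u 1 = y) :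
    riemDist X ψ x y ≤ curveLength ψ u 0 1 :=
  csInf_le ⟨0, by rintro _ ⟨u, -, -, -, -, rfl⟩; exact curveLength_nonneg ψ u zero_le_one⟩
    ⟨u, hu, huX, h0, h1, rfl⟩

lemma le_riemDist {b : ℝ} (hxy : segment ℝ x y ⊆ X)
    (hb : ∀ u : ℝ → EuclideanSpace ℝ (Fin d), ContDiff ℝ 1 u → (∀ t ∈ Icc (0 : ℝ) 1, u t ∈ X) →
      u 0 = x → u 1 = y → b ≤ curveLength ψ u 0 1) :
    b ≤ riemDist X ψ x y :=
  le_csInf ⟨_, lineMap x y, contDiff_lineMap x y, fun t ht => hxy (lineMap_mem_segment ℝ x y ht),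
      lineMap_apply_zero x y, lineMap_apply_one x y, rfl⟩
    (by rintro _ ⟨u, hu, huX, h0, h1, rfl⟩; exact hb u hu huX h0 h1)

lemma curveLength_comp_mul_left {u : ℝ → EuclideanSpace ℝ (Fin d)} (hu : Differentiable ℝ u)
    {s : ℝ} (hs : 0 ≤ s) : curveLength ψ (fun t => u (s * t)) 0 1 = curveLength ψ u 0 s := by
  have hd : ∀ t, deriv (fun t => u (s * t)) t = s • deriv u (s * t) := fun t =>
    ((hu (s * t)).hasDerivAt.scomp t ((hasDerivAt_id t).const_mul s)).deriv.trans (by simp)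
  simp only [curveLength, hd, quadForm_smul, Real.sqrt_mul (sq_nonneg s), Real.sqrt_sq hs,
    integral_const_mul]
  simpa using smul_integral_comp_mul_left (fun t => √(quadForm (hess ψ (u t)) (deriv u t))) s
    (a := 0) (b := 1)

lemma riemDist_le_curveLength_of_mem_Icc {V : Set (EuclideanSpace ℝ (Fin d))} (hV : IsOpen V)
    (hψ : ContDiffOn ℝ 2 ψ V) (hXV : X ⊆ V) {u : ℝ → EuclideanSpace ℝ (Fin d)}
    (hu : ContDiff ℝ 1 u) (huX : ∀ t ∈ Icc (0 : ℝ) 1, u t ∈ X) {s : ℝ} (hs : s ∈ Icc (0 : ℝ) 1) :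
    riemDist X ψ (u 0) (u s) ≤ curveLength ψ u 0 1 := by
  have hsub : Icc 0 s ⊆ Icc (0 : ℝ) 1 := Icc_subset_Icc le_rfl hs.2
  calc riemDist X ψ (u 0) (u s) ≤ curveLength ψ (fun t => u (s * t)) 0 1 :=
        riemDist_le_curveLength (hu.comp (contDiff_const.mul contDiff_id))
          (fun t ht => huX _ (hsub ⟨mul_nonneg hs.1 ht.1, mul_le_of_le_one_right hs.1 ht.2⟩))
          (by simp) (by simp)
    _ = curveLength ψ u 0 s := curveLength_comp_mul_left (hu.differentiable one_ne_zero) hs.1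
    _ ≤ curveLength ψ u 0 1 :=
        integral_mono_interval le_rfl hs.1 hs.2
          (Filter.Eventually.of_forall fun _ => Real.sqrt_nonneg _)
          (intervalIntegrable_sqrt_quadForm_hess hV hψ hu fun t ht =>
            hXV (huX t (by rwa [uIcc_of_le zero_le_one] at ht)))

end RiemDist

section Comparable

variable {X U V : Set (EuclideanSpace ℝ (Fin d))} {ψ : EuclideanSpace ℝ (Fin d) → ℝ}
  {p x y : EuclideanSpace ℝ (Fin d)} {lam : ℝ}

lemma breg_mem_Icc (hV : IsOpen V) (hψ : ContDiffOn ℝ 2 ψ V) (hUV : U ⊆ V) (hU : Convex ℝ U)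
    (hcmp : HessComparable ψ U p lam) (hlam : 0 < lam) (hx : x ∈ U) (hy : y ∈ U) :
    breg ψ x y ∈ Icc (quadForm (hess ψ p) (y - x) / (2 * lam))
      (lam * quadForm (hess ψ p) (y - x) / 2) := by
  obtain ⟨z, hz, hbreg⟩ :=
    exists_breg_eq_half_quadForm_hess hV hψ ((hU.segment_subset hy hx).trans hUV)
  obtain ⟨hlo, hhi⟩ := hcmp z (hU.segment_subset hy hx hz) (y - x)
  rw [hbreg]
  constructor
  · rw [div_le_div_iff₀ (by positivity) two_pos]
    nlinarith
  · rw [one_div, inv_mul_le_iff₀ hlam] at hlo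
    linarith

lemma sq_riemDist_le (hUX : U ⊆ X) (hU : Convex ℝ U) (hp : (hess ψ p).PosSemidef)
    (hcmp : HessComparable ψ U p lam) (hlam : 0 < lam) (hx : x ∈ U) (hy : y ∈ U) :
    riemDist X ψ x y ^ 2 ≤ lam * quadForm (hess ψ p) (y - x) := by
  have hseg : ∀ t ∈ Icc (0 : ℝ) 1, lineMap x y t ∈ U := fun t ht =>
    hU.segment_subset hx hy (lineMap_mem_segment ℝ x y ht)
  have hlen : curveLength ψ (lineMap x y) 0 1 ≤ √(lam * quadForm (hess ψ p) (y - x)) := by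
    refine (Real.le_norm_self _).trans ((norm_integral_le_of_norm_le_const fun t ht => ?_).trans_eq
      (by rw [sub_zero, abs_one, mul_one]))
    rw [hasDerivAt_lineMap.deriv, Real.norm_eq_abs, abs_of_nonneg (Real.sqrt_nonneg _)]
    refine Real.sqrt_le_sqrt ?_
    have h := (hcmp _ (hseg t (Ioc_subset_Icc_self (by simpa using ht))) (y - x)).1
    rw [one_div, inv_mul_le_iff₀ hlam] at h
    exact h
  calc riemDist X ψ x y ^ 2 ≤ √(lam * quadForm (hess ψ p) (y - x)) ^ 2 := by
        gcongr
        · exact riemDist_nonneg X ψ x y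
        · exact (riemDist_le_curveLength (contDiff_lineMap x y) (fun t ht => hUX (hseg t ht))
            (lineMap_apply_zero x y) (lineMap_apply_one x y)).trans hlen
    _ = lam * quadForm (hess ψ p) (y - x) :=
        Real.sq_sqrt (mul_nonneg hlam.le (hp.quadForm_nonneg _))

lemma sqrt_div_le_curveLength (hV : IsOpen V) (hψ : ContDiffOn ℝ 2 ψ V) (hUV : U ⊆ V)
    (hp : (hess ψ p).PosSemidef) (hcmp : HessComparable ψ U p lam) (hlam : 0 < lam)
    {u : ℝ → EuclideanSpace ℝ (Fin d)} (hu : ContDiff ℝ 1 u) (huU : ∀ t ∈ Icc (0 : ℝ) 1, u t ∈ U) :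
    √(quadForm (hess ψ p) (u 1 - u 0) / lam) ≤ curveLength ψ u 0 1 := by
  have hmono : ∫ t in (0 : ℝ)..1, √(quadForm (hess ψ p) (deriv u t))
      ≤ ∫ t in (0 : ℝ)..1, √lam * √(quadForm (hess ψ (u t)) (deriv u t)) := by
    refine integral_mono_on zero_le_one
      ((Real.continuous_sqrt.comp ?_).intervalIntegrable 0 1)
      ((intervalIntegrable_sqrt_quadForm_hess hV hψ hu fun t ht =>
        hUV (huU t (by rwa [uIcc_of_le zero_le_one] at ht))).const_mul _) fun t ht => ?_
    · exact continuousOn_univ.1 <|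
        continuousOn_quadForm continuousOn_const (hu.continuous_deriv le_rfl).continuousOn
    · rw [← Real.sqrt_mul hlam.le]
      exact Real.sqrt_le_sqrt (hcmp _ (huU t ht) _).2
  rw [integral_const_mul] at hmono
  rw [Real.sqrt_div' _ hlam.le, div_le_iff₀ (Real.sqrt_pos.2 hlam), mul_comm]
  exact (hp.sqrt_quadForm_sub_le_integral hu zero_le_one).trans hmono

lemma quadForm_le_mul_sq_riemDist (hV : IsOpen V) (hψ : ContDiffOn ℝ 2 ψ V) (hXV : X ⊆ V)
    (hUX : U ⊆ X) (hU : Convex ℝ U) (hp : (hess ψ p).PosSemidef)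
    (hcmp : HessComparable ψ U p lam) (hlam : 0 < lam) (hx : x ∈ U) (hy : y ∈ U)
    (hlt : riemDist X ψ x y < sInf {r : ℝ | ∃ z ∈ X \ U, r = riemDist X ψ x z}) :
    quadForm (hess ψ p) (y - x) ≤ lam * riemDist X ψ x y ^ 2 := by
  set A := sInf {r : ℝ | ∃ z ∈ X \ U, r = riemDist X ψ x z}
  have hA : ∀ z ∈ X \ U, A ≤ riemDist X ψ x z := fun z hz =>
    csInf_le ⟨0, by rintro _ ⟨z, -, rfl⟩; exact riemDist_nonneg X ψ x z⟩ ⟨z, hz, rfl⟩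
  have hmin : min √(quadForm (hess ψ p) (y - x) / lam) A ≤ riemDist X ψ x y := by
    refine le_riemDist ((hU.segment_subset hx hy).trans hUX) fun u hu huX hu0 hu1 => ?_
    by_cases huU : ∀ t ∈ Icc (0 : ℝ) 1, u t ∈ U
    · rw [← hu0, ← hu1]
      exact (min_le_left _ _).trans
        (sqrt_div_le_curveLength hV hψ (hUX.trans hXV) hp hcmp hlam hu huU)
    · push Not at huU
      obtain ⟨t, ht, htU⟩ := huU
      refine (min_le_right _ _).trans ((hA _ ⟨huX t ht, htU⟩).trans ?_)
      rw [← hu0]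
      exact riemDist_le_curveLength_of_mem_Icc hV hψ hXV hu huX ht
  have hsqrt := (min_le_iff.mp hmin).resolve_right hlt.not_ge
  have hsq := pow_le_pow_left₀ (Real.sqrt_nonneg _) hsqrt 2
  rwa [Real.sq_sqrt (div_nonneg (hp.quadForm_nonneg _) hlam.le), div_le_iff₀ hlam,
    mul_comm] at hsq

end Comparable

theorem stmt8_general {d : ℕ} (X : Set (EuclideanSpace ℝ (Fin d)))
    (ψ : EuclideanSpace ℝ (Fin d) → ℝ)
    (hC2 : ∃ V : Set (EuclideanSpace ℝ (Fin d)), IsOpen V ∧ X ⊆ V ∧ ContDiffOn ℝ 2 ψ V)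
    (hpos : ∀ x ∈ X, (hess ψ x).PosDef)
    (lam : ℝ) (hlam : 1 < lam)
    (U : Set (EuclideanSpace ℝ (Fin d))) (hUX : U ⊆ X) (hUconv : Convex ℝ U)
    (p : EuclideanSpace ℝ (Fin d)) (hp : p ∈ U)
    (hcmp : ∀ u ∈ U, ∀ v : EuclideanSpace ℝ (Fin d),
      (1 / lam) * quadForm (hess ψ u) v ≤ quadForm (hess ψ p) v ∧
      quadForm (hess ψ p) v ≤ lam * quadForm (hess ψ u) v) :
    ∀ x ∈ U, ∀ y ∈ U,
      riemDist X ψ x y < sInf {r : ℝ | ∃ z ∈ X \ U, r = riemDist X ψ x z} →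
      (1 / (2 * lam ^ 4)) * (riemDist X ψ x y) ^ 2 ≤ breg ψ x y ∧
      breg ψ x y ≤ (lam ^ 4 / 2) * (riemDist X ψ x y) ^ 2 := by
  obtain ⟨V, hV, hXV, hψ⟩ := hC2
  intro x hx y hy hlt
  have hlam0 : 0 < lam := zero_lt_one.trans hlam
  have hpsd : (hess ψ p).PosSemidef := (hpos p (hUX hp)).posSemidef
  obtain ⟨hlo, hhi⟩ := breg_mem_Icc hV hψ (hUX.trans hXV) hUconv hcmp hlam0 hx hy
  have hγN := sq_riemDist_le hUX hUconv hpsd hcmp hlam0 hx hy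
  have hNγ := quadForm_le_mul_sq_riemDist hV hψ hXV hUX hUconv hpsd hcmp hlam0 hx hy hlt
  set γ := riemDist X ψ x y
  set N := quadForm (hess ψ p) (y - x)
  have hN : 0 ≤ N := hpsd.quadForm_nonneg _
  have hlam24 : lam ^ 2 ≤ lam ^ 4 := pow_le_pow_right₀ hlam.le (by norm_num)
  constructor
  · calc 1 / (2 * lam ^ 4) * γ ^ 2 ≤ 1 / (2 * lam ^ 4) * (lam * N) := by gcongr
      _ ≤ N / (2 * lam) := by
        rw [div_mul_eq_mul_div, one_mul, div_le_div_iff₀ (by positivity) (by positivity)]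
        nlinarith
      _ ≤ breg ψ x y := hlo
  · calc breg ψ x y ≤ lam * N / 2 := hhi
      _ ≤ lam * (lam * γ ^ 2) / 2 := by gcongr
      _ ≤ lam ^ 4 / 2 * γ ^ 2 := by nlinarith [sq_nonneg γ]

/-- Local equivalence between the Bregman distance and the squared Riemannian distance
on a relatively open convex subset `U` of `X` on which the Hessian of `ψ` is
`λ`-comparable to its value at `p`. -/
theorem stmt8 {d : ℕ} (X : Set (EuclideanSpace ℝ (Fin d)))
    (hXcomp : IsCompact X) (hXconv : Convex ℝ X) (hXint : (interior X).Nonempty)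
    (ψ : EuclideanSpace ℝ (Fin d) → ℝ)
    (hC2 : ∃ V : Set (EuclideanSpace ℝ (Fin d)), IsOpen V ∧ X ⊆ V ∧ ContDiffOn ℝ 2 ψ V)
    (hpos : ∀ x ∈ X, (hess ψ x).PosDef)
    (lam : ℝ) (hlam : 1 < lam)
    (U : Set (EuclideanSpace ℝ (Fin d))) (hUX : U ⊆ X) (hUconv : Convex ℝ U)
    (hUopen : ∃ W : Set (EuclideanSpace ℝ (Fin d)), IsOpen W ∧ U = X ∩ W)
    (p : EuclideanSpace ℝ (Fin d)) (hp : p ∈ U)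
    (hcmp : ∀ u ∈ U, ∀ v : EuclideanSpace ℝ (Fin d),
      (1 / lam) * quadForm (hess ψ u) v ≤ quadForm (hess ψ p) v ∧
      quadForm (hess ψ p) v ≤ lam * quadForm (hess ψ u) v) :
    ∀ x ∈ U, ∀ y ∈ U,
      riemDist X ψ x y < sInf {r : ℝ | ∃ z ∈ X \ U, r = riemDist X ψ x z} →
      (1 / (2 * lam ^ 4)) * (riemDist X ψ x y) ^ 2 ≤ breg ψ x y ∧
      breg ψ x y ≤ (lam ^ 4 / 2) * (riemDist X ψ x y) ^ 2 :=
  stmt8_general X ψ hC2 hpos lam hlam U hUX hUconv p hp hcmp
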